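/- Let C = C_Δ ⊕ ℝ^{n−m} ⊂ ℝ^n, where C_Δ is an m-dimensional simplicial cone, let E_1, …, E_m be the facets of C, and let 𝐏 ⊂ C be a finite lattice set with P = Conv(𝐏) such that each D_i is nonempty. Then: (1) each off-coordinate polytope D_i is a daughter polytope of 𝐏, with 𝒟(D_i) equal to {P ∩ E_i} if P ∩ E_i ≠ ∅ and empty otherwise; (2) for every face F of P, the number of off-coordinate polytopes intersecting F equals the dimension of the minimal face of C containing F; (3) the off-coordinate polytopes D_1, …, D_n are semi-interlaced in 𝐏, and the sutures are exactly the V-faces of P. -/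

import Mathlib

/-! In the coordinates `ξ` of the splitting `ℝⁿ = span v ⊕ W`, the cone `C` is `{ξ ≥ 0}`, its
nonempty faces are the sets where the coordinates outside some `T` vanish, of dimension
`|T| + (n - m)`, and for `i < m` the polytope `D i` is the hull of the points of `A` with `ξ i > 0`.
A face of `P` missing `D i` lies in the hyperplane `ξ i = 0`, so `P ∩ E_i` is the only maximal one.
A face `F` of `P` meets `D i` (`i < m`) iff `ξ i` does not vanish on `F`, and meets every other
`D i`; so the number of `D i` meeting `F` is `|T_F| + (n - m)` for the set `T_F` of coordinates
not vanishing on `F`, which is the dimension of the least face of `C` containing `F`. Since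
`dim F ≤ dim Q` for every face `Q ⊇ F` of `C`, semi-interlacing and the description of the
sutures follow. -/

open Pointwise Filter
open scoped Classical

noncomputable section

def intLattice (n : ℕ) : AddSubgroup (Fin n → ℝ) where
  carrier := {x | ∀ i, ∃ m : ℤ, x i = (m : ℝ)}
  zero_mem' := fun i => ⟨0, by simp⟩
  add_mem' := by
    intro a b ha hb i
    obtain ⟨p, hp⟩ := ha i
    obtain ⟨q, hq⟩ := hb i
    exact ⟨p + q, by simp [hp, hq]⟩
  neg_mem' := by
    intro a ha i
    obtain ⟨p, hp⟩ := ha i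
    exact ⟨-p, by simp [hp]⟩

/-- Lattice volume (normalized so that a unit simplex of the lattice `L` has
volume `1`) of a `k`-dimensional set `Q`, defined via asymptotic counting of
lattice points in dilations of `Q`. -/
def latVol {E : Type*} [AddCommGroup E] [Module ℝ E] (L : AddSubgroup E)
    (k : ℕ) (Q : Set E) : ℝ :=
  Filter.limsup
    (fun t : ℕ => (Nat.factorial k : ℝ) *
      (Nat.card ↥(((t : ℝ) • Q) ∩ (L : Set E))) / (t : ℝ) ^ k) Filter.atTop

/-- Mixed volume of the polytopes `Q i`, `i ∈ T`, via inclusion-exclusion of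
lattice volumes of Minkowski sums. -/
def mixedVol {E : Type*} [AddCommGroup E] [Module ℝ E] {ι : Type*}
    (L : AddSubgroup E) (T : Finset ι) (Q : ι → Set E) : ℝ :=
  ∑ I ∈ T.powerset,
    if I.Nonempty then
      (-1 : ℝ) ^ (T.card - I.card) * latVol L T.card (∑ i ∈ I, Q i)
    else 0

/-- `F` is a face of `P`: the set of maximizers over `P` of some linear functional. -/
def IsFaceOf {E : Type*} [AddCommGroup E] [Module ℝ E] (P F : Set E) : Prop :=
  ∃ ξ : E →ₗ[ℝ] ℝ, F = {x ∈ P | ∀ y ∈ P, ξ y ≤ ξ x}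

/-- Dimension of (the affine span of) a set. -/
def sdim {E : Type*} [AddCommGroup E] [Module ℝ E] (Q : Set E) : ℕ :=
  Module.finrank ℝ (vectorSpan ℝ Q)

/-- The family D-family: faces of `P` maximal among the faces disjoint from `D`. -/
def DFam {E : Type*} [AddCommGroup E] [Module ℝ E] (P D : Set E) : Set (Set E) :=
  {F | Maximal (fun G => IsFaceOf P G ∧ G ∩ D = ∅) F}

/-- `D` is a daughter polytope of the finite set `A`. -/
def IsDaughter {E : Type*} [AddCommGroup E] [Module ℝ E] (A : Finset E) (D : Set E) : Prop :=
  D.Nonempty ∧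
  (∀ F ∈ DFam (convexHull ℝ (A : Set E)) D, ∀ F' ∈ DFam (convexHull ℝ (A : Set E)) D,
    F ≠ F' → F ∩ F' = ∅) ∧
  D = convexHull ℝ ((A : Set E) \ ⋃ F ∈ DFam (convexHull ℝ (A : Set E)) D, F)

/-- The daughter polytopes `D i`, `i ∈ T`, are semi-interlaced in `A`. -/
def SemiInterlaced {E : Type*} [AddCommGroup E] [Module ℝ E] {ι : Type*}
    (A : Finset E) (T : Finset ι) (D : ι → Set E) : Prop :=
  (∀ i ∈ T, IsDaughter A (D i)) ∧
  ∀ F, IsFaceOf (convexHull ℝ (A : Set E)) F →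
    sdim F ≤ (T.filter fun i => (D i ∩ F).Nonempty).card

/-- A face `F` of `Conv A` is a suture if exactly `dim F` of the `D i` meet it. -/
def IsSuture {E : Type*} [AddCommGroup E] [Module ℝ E] {ι : Type*}
    (A : Finset E) (T : Finset ι) (D : ι → Set E) (F : Set E) : Prop :=
  IsFaceOf (convexHull ℝ (A : Set E)) F ∧
  (T.filter fun i => (D i ∩ F).Nonempty).card = sdim F

open LinearMap (ker)

section Polytope

variable {E : Type*} [AddCommGroup E] [Module ℝ E]

theorem IsFaceOf.subset {P F : Set E} (hF : IsFaceOf P F) : F ⊆ P := by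
  obtain ⟨η, rfl⟩ := hF
  exact Set.sep_subset _ _

theorem IsFaceOf.nonempty {A : Finset E} {F : Set E} (hA : A.Nonempty)
    (hF : IsFaceOf (convexHull ℝ (A : Set E)) F) : F.Nonempty := by
  obtain ⟨η, rfl⟩ := hF
  obtain ⟨a, haA, hmax⟩ := A.exists_max_image η hA
  exact ⟨a, subset_convexHull ℝ _ haA, fun y hy =>
    convexHull_min (fun b hb => hmax b hb) (convex_halfSpace_le η.isLinear (η a)) hy⟩

theorem IsFaceOf.subset_convexHull_inter {A : Finset E} {F : Set E}
    (hF : IsFaceOf (convexHull ℝ (A : Set E)) F) : F ⊆ convexHull ℝ ((A : Set E) ∩ F) := by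
  obtain ⟨η, rfl⟩ := hF
  rintro x ⟨hxP, hxmax⟩
  obtain ⟨w, hw0, hw1, hx⟩ := Finset.mem_convexHull'.1 hxP
  -- `η x` is the `w`-average of the values `η a ≤ η x`, so every weighted point is a maximizer.
  have hηx : η x = ∑ a ∈ A, w a * η a := by simp [← hx, map_sum]
  have hgap : ∑ a ∈ A, w a * (η x - η a) = 0 := by
    rw [hηx]
    simp only [mul_sub, Finset.sum_sub_distrib, ← Finset.sum_mul, hw1, one_mul, sub_self]
  have hmax : ∀ a ∈ A, w a ≠ 0 →
      a ∈ (A : Set E) ∩ {x ∈ convexHull ℝ ↑A | ∀ y ∈ convexHull ℝ ↑A, η y ≤ η x} := by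
    intro a ha hwa
    have hle : ∀ b ∈ A, 0 ≤ w b * (η x - η b) := fun b hb =>
      mul_nonneg (hw0 b hb) (sub_nonneg.2 (hxmax b (subset_convexHull ℝ _ hb)))
    have hηa : η a = η x := by
      have := (Finset.sum_eq_zero_iff_of_nonneg hle).1 hgap a ha
      linarith [(mul_eq_zero.1 this).resolve_left hwa]
    exact ⟨ha, subset_convexHull ℝ _ ha, fun y hy => hηa ▸ hxmax y hy⟩
  rw [← hx, ← Finset.sum_filter_of_ne fun a _ h => left_ne_zero_of_smul h]
  refine (convex_convexHull ℝ _).sum_mem (fun a ha => hw0 a (Finset.filter_subset _ _ ha))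
    (by rw [Finset.sum_filter_ne_zero, hw1]) fun a ha => subset_convexHull ℝ _ ?_
  obtain ⟨ha, hwa⟩ := Finset.mem_filter.1 ha
  exact hmax a ha hwa

theorem convexHull_sdiff_ker_subset {A : Set E} {φ : E →ₗ[ℝ] ℝ} (hφ : ∀ a ∈ A, 0 ≤ φ a) :
    convexHull ℝ (A \ ker φ) ⊆ {x | 0 < φ x} :=
  convexHull_min (fun a ha => (hφ a ha.1).lt_of_ne (Ne.symm ha.2))
    (convex_halfSpace_gt φ.isLinear 0)

theorem IsFaceOf.inter_convexHull_sdiff_ker_eq_empty_iff {A : Finset E} {F : Set E}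
    {φ : E →ₗ[ℝ] ℝ} (hF : IsFaceOf (convexHull ℝ (A : Set E)) F) (hφ : ∀ a ∈ A, 0 ≤ φ a) :
    F ∩ convexHull ℝ ((A : Set E) \ ker φ) = ∅ ↔ F ⊆ ker φ := by
  refine ⟨fun h => hF.subset_convexHull_inter.trans (convexHull_min (fun a ha => ?_)
    (ker φ).convex), fun h => Set.eq_empty_of_forall_notMem fun x hx =>
      (convexHull_sdiff_ker_subset hφ hx.2).ne' (h hx.1)⟩
  by_contra ha'
  exact Set.eq_empty_iff_forall_notMem.1 h a ⟨ha.2, subset_convexHull ℝ _ ⟨ha.1, ha'⟩⟩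

theorem isFaceOf_inter_ker {P : Set E} {φ : E →ₗ[ℝ] ℝ} (hφ : ∀ x ∈ P, 0 ≤ φ x)
    (hne : (P ∩ ker φ).Nonempty) : IsFaceOf P (P ∩ ker φ) := by
  obtain ⟨z, hzP, hz⟩ := hne
  refine ⟨-φ, Set.ext fun x => ⟨fun ⟨hxP, hx⟩ => ⟨hxP, fun y hy => ?_⟩,
    fun ⟨hxP, hmax⟩ => ⟨hxP, ?_⟩⟩⟩
  · simpa [LinearMap.mem_ker.1 hx] using hφ y hy
  · have := hmax z hzP
    simp only [LinearMap.neg_apply, LinearMap.mem_ker.1 hz, neg_zero, neg_nonneg] at this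
    exact le_antisymm this (hφ x hxP)

theorem dFam_convexHull_sdiff_ker {A : Finset E} (hA : A.Nonempty) {φ : E →ₗ[ℝ] ℝ}
    (hφ : ∀ a ∈ A, 0 ≤ φ a) :
    DFam (convexHull ℝ (A : Set E)) (convexHull ℝ ((A : Set E) \ ker φ)) =
      {G | G = convexHull ℝ (A : Set E) ∩ ker φ ∧ G.Nonempty} := by
  set P := convexHull ℝ (A : Set E)
  have hφP : ∀ x ∈ P, 0 ≤ φ x := fun x hx =>
    convexHull_min hφ (convex_halfSpace_ge φ.isLinear 0) hx
  have hdisj : ∀ G, (IsFaceOf P G ∧ G ∩ convexHull ℝ (↑A \ ker φ) = ∅) ↔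
      IsFaceOf P G ∧ G ⊆ ker φ :=
    fun G => and_congr_right fun hG => hG.inter_convexHull_sdiff_ker_eq_empty_iff hφ
  ext G
  simp only [DFam, hdisj, Set.mem_ofPred_eq]
  constructor
  · intro hG
    have hGne : G.Nonempty := hG.1.1.nonempty hA
    have hGZ : G ⊆ P ∩ ker φ := Set.subset_inter hG.1.1.subset hG.1.2
    exact ⟨hG.eq_of_subset ⟨isFaceOf_inter_ker hφP (hGne.mono hGZ), Set.inter_subset_right⟩ hGZ,
      hGne⟩
  · rintro ⟨rfl, hZ⟩
    exact ⟨⟨isFaceOf_inter_ker hφP hZ, Set.inter_subset_right⟩,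
      fun G hG _ => Set.subset_inter hG.1.subset hG.2⟩

theorem isDaughter_convexHull_sdiff_ker {A : Finset E} {φ : E →ₗ[ℝ] ℝ} (hφ : ∀ a ∈ A, 0 ≤ φ a)
    (hD : (convexHull ℝ ((A : Set E) \ ker φ)).Nonempty) :
    IsDaughter A (convexHull ℝ ((A : Set E) \ ker φ)) := by
  have hA : A.Nonempty :=
    Finset.coe_nonempty.1 ((convexHull_nonempty_iff.1 hD).mono Set.sdiff_subset)
  have hU : ⋃ F ∈ {G | G = convexHull ℝ (A : Set E) ∩ ker φ ∧ G.Nonempty}, F =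
      convexHull ℝ (A : Set E) ∩ ker φ := by
    ext x
    simp only [Set.mem_iUnion, Set.mem_ofPred_eq, exists_prop]
    exact ⟨fun ⟨F, ⟨hF, _⟩, hx⟩ => hF ▸ hx, fun hx => ⟨_, ⟨rfl, x, hx⟩, hx⟩⟩
  rw [IsDaughter, dFam_convexHull_sdiff_ker hA hφ, hU, Set.sdiff_inter,
    Set.sdiff_eq_empty.2 (subset_convexHull ℝ _), Set.empty_union]
  exact ⟨hD, fun F hF F' hF' hne => (hne (hF.1.trans hF'.1.symm)).elim, rfl⟩

theorem dFam_convexHull_self {A : Finset E} (hA : A.Nonempty) :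
    DFam (convexHull ℝ (A : Set E)) (convexHull ℝ (A : Set E)) = ∅ :=
  Set.eq_empty_of_forall_notMem fun _ hG =>
    (hG.1.1.nonempty hA).ne_empty (Set.inter_eq_left.2 hG.1.1.subset ▸ hG.1.2)

theorem isDaughter_convexHull_self {A : Finset E} (hA : A.Nonempty) :
    IsDaughter A (convexHull ℝ (A : Set E)) := by
  rw [IsDaughter, dFam_convexHull_self hA]
  simp [hA]

end Polytope

section CoordinateCone

variable {E ι : Type*} [AddCommGroup E] [Module ℝ E]

def coordCone (ξ : ι → E →ₗ[ℝ] ℝ) : Set E := {x | ∀ i, 0 ≤ ξ i x}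

def coordFace (ξ : ι → E →ₗ[ℝ] ℝ) (T : Finset ι) : Set E :=
  {x ∈ coordCone ξ | ∀ i ∉ T, ξ i x = 0}

def coordSupport [Fintype ι] (ξ : ι → E →ₗ[ℝ] ℝ) (F : Set E) : Finset ι :=
  Finset.univ.filter fun i => ¬ F ⊆ ker (ξ i)

variable {ξ : ι → E →ₗ[ℝ] ℝ}

theorem convex_coordCone (ξ : ι → E →ₗ[ℝ] ℝ) : Convex ℝ (coordCone ξ) := by
  simpa only [coordCone, Set.ofPred_forall] using
    convex_iInter fun i => convex_halfSpace_ge (ξ i).isLinear 0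

theorem isFaceOf_coordFace [Fintype ι] (T : Finset ι) : IsFaceOf (coordCone ξ) (coordFace ξ T) := by
  refine ⟨-∑ i ∈ Tᶜ, ξ i, Set.ext fun x => ?_⟩
  have hsum : ∀ y ∈ coordCone ξ, 0 ≤ ∑ i ∈ Tᶜ, ξ i y := fun y hy =>
    Finset.sum_nonneg fun i _ => hy i
  simp only [coordFace, Set.mem_ofPred_eq, LinearMap.neg_apply, LinearMap.sum_apply, neg_le_neg_iff]
  refine and_congr_right fun hx => ⟨fun h y hy => ?_, fun h i hi => ?_⟩
  · rw [Finset.sum_eq_zero fun i hi => h i (Finset.mem_compl.1 hi)]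
    exact hsum y hy
  · have h0 := (Finset.sum_eq_zero_iff_of_nonneg fun j _ => hx j).1
      (le_antisymm (by simpa using h 0 fun _ => by simp) (hsum x hx))
    exact h0 i (Finset.mem_compl.2 hi)

theorem coordFace_mono : Monotone (coordFace ξ) :=
  fun _ _ hTT' _ hx => ⟨hx.1, fun i hi => hx.2 i fun h => hi (hTT' h)⟩

theorem subset_coordFace_iff [Fintype ι] {F : Set E} {T : Finset ι} :
    F ⊆ coordFace ξ T ↔ F ⊆ coordCone ξ ∧ coordSupport ξ F ⊆ T := by
  simp only [coordFace, Set.subset_def, coordSupport, Finset.subset_iff, Finset.mem_filter,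
    Finset.mem_univ, true_and, SetLike.mem_coe, LinearMap.mem_ker, Set.mem_ofPred_eq]
  constructor
  · intro h
    exact ⟨fun x hx => (h x hx).1, fun i hi => by_contra fun hiT => hi fun x hx => (h x hx).2 i hiT⟩
  · intro h x hx
    exact ⟨h.1 x hx, fun i hiT => by_contra fun hxi => hiT (h.2 fun hF => hxi (hF x hx))⟩

end CoordinateCone

theorem finrank_eq_finrank_sub_card_of_isCompl {E ι : Type*} [AddCommGroup E] [Module ℝ E]
    [FiniteDimensional ℝ E] [Fintype ι] {v : ι → E} {W : Submodule ℝ E}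
    (hv : LinearIndependent ℝ v) (hcompl : IsCompl (Submodule.span ℝ (Set.range v)) W) :
    Module.finrank ℝ W = Module.finrank ℝ E - Fintype.card ι := by
  rw [← Submodule.finrank_add_eq_of_isCompl hcompl, finrank_span_eq_card hv]
  omega

section SimplicialCone

variable {E ι : Type*} [AddCommGroup E] [Module ℝ E] [Fintype ι] {v : ι → E}
  {W : Submodule ℝ E} (hv : LinearIndependent ℝ v)
  (hcompl : IsCompl (Submodule.span ℝ (Set.range v)) W)

def coneCoord (i : ι) : E →ₗ[ℝ] ℝ :=
  (Module.Basis.span hv).coord i ∘ₗ (Submodule.span ℝ (Set.range v)).projectionOnto W hcompl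

theorem coneCoord_sum_add (c : ι → ℝ) {w : E} (hw : w ∈ W) (i : ι) :
    coneCoord hv hcompl i ((∑ j, c j • v j) + w) = c i := by
  have hspan : ∑ j, c j • v j = ((∑ j, c j • Module.Basis.span hv j :
      Submodule.span ℝ (Set.range v)) : E) := by
    simp [Module.Basis.span_apply]
  rw [coneCoord, LinearMap.comp_apply, map_add,
    Submodule.projectionOnto_apply_of_mem_right hcompl hw, add_zero, hspan,
    Submodule.projectionOnto_apply_left, Module.Basis.coord_apply, Module.Basis.repr_sum_self]

theorem coneCoord_apply_of_mem {w : E} (hw : w ∈ W) (i : ι) : coneCoord hv hcompl i w = 0 := by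
  simpa using coneCoord_sum_add hv hcompl 0 hw i

theorem coneCoord_apply_self [DecidableEq ι] (i j : ι) :
    coneCoord hv hcompl i (v j) = if i = j then 1 else 0 := by
  simpa [Pi.single_apply] using coneCoord_sum_add hv hcompl (Pi.single j 1) W.zero_mem i

theorem sub_sum_coneCoord_smul_mem (x : E) : x - ∑ j, coneCoord hv hcompl j x • v j ∈ W := by
  obtain ⟨y, hy, w, hw, rfl⟩ :=
    Submodule.mem_sup.1 (hcompl.codisjoint.eq_top ▸ Submodule.mem_top (x := x))
  obtain ⟨c, rfl⟩ := (Submodule.mem_span_range_iff_exists_fun ℝ).1 hy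
  simpa [coneCoord_sum_add hv hcompl c hw] using hw

theorem exists_sum_smul_add_iff (p : (ι → ℝ) → Prop) (x : E) :
    (∃ (c : ι → ℝ) (w : E), p c ∧ w ∈ W ∧ x = (∑ i, c i • v i) + w) ↔
      p fun i => coneCoord hv hcompl i x := by
  refine ⟨fun ⟨c, w, hc, hw, hx⟩ => ?_, fun h => ⟨_, _, h, sub_sum_coneCoord_smul_mem hv hcompl x,
    (add_sub_cancel _ _).symm⟩⟩
  convert hc
  rw [hx, coneCoord_sum_add hv hcompl c hw]

theorem apply_eq_sum_coneCoord_mul (η : E →ₗ[ℝ] ℝ) (hη : ∀ w ∈ W, η w = 0) (x : E) :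
    η x = ∑ j, coneCoord hv hcompl j x * η (v j) := by
  have := hη _ (sub_sum_coneCoord_smul_mem hv hcompl x)
  simpa [map_sub, sub_eq_zero] using this

theorem coordCone_coneCoord :
    coordCone (coneCoord hv hcompl) =
      {x | ∃ (c : ι → ℝ) (w : E), (∀ i, 0 ≤ c i) ∧ w ∈ W ∧ x = (∑ i, c i • v i) + w} :=
  (Set.ext fun x => exists_sum_smul_add_iff hv hcompl (fun c => ∀ i, 0 ≤ c i) x).symm

theorem coordCone_inter_ker_coneCoord (j : ι) :
    coordCone (coneCoord hv hcompl) ∩ ker (coneCoord hv hcompl j) =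
      {x | ∃ (c : ι → ℝ) (w : E), (∀ i, 0 ≤ c i) ∧ c j = 0 ∧ w ∈ W ∧
        x = (∑ i, c i • v i) + w} := by
  ext x
  simpa only [and_assoc, Set.mem_ofPred_eq, Set.mem_inter_iff, SetLike.mem_coe,
    LinearMap.mem_ker, coordCone] using
    (exists_sum_smul_add_iff hv hcompl (fun c => (∀ i, 0 ≤ c i) ∧ c j = 0) x).symm

theorem IsFaceOf.exists_eq_coordFace {Q : Set E}
    (hQ : IsFaceOf (coordCone (coneCoord hv hcompl)) Q) (hne : Q.Nonempty) :
    ∃ T, Q = coordFace (coneCoord hv hcompl) T := by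
  obtain ⟨η, rfl⟩ := hQ
  obtain ⟨x₀, hx₀, hmax⟩ := hne
  have hW : ∀ w ∈ W, η w = 0 := by
    intro w hw
    have hmem : ∀ t : ℝ, x₀ + t • w ∈ coordCone (coneCoord hv hcompl) := fun t i => by
      simpa [coneCoord_apply_of_mem hv hcompl (W.smul_mem t hw)] using hx₀ i
    have h₁ := hmax _ (hmem 1)
    have h₂ := hmax _ (hmem (-1))
    simp only [map_add, map_smul, smul_eq_mul] at h₁ h₂
    linarith
  have hv₀ : ∀ j, η (v j) ≤ 0 := fun j => by
    have := hmax (x₀ + v j) fun i => by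
      rw [map_add, coneCoord_apply_self hv hcompl]
      exact add_nonneg (hx₀ i) (by split_ifs <;> norm_num)
    simpa using this
  have hsum := apply_eq_sum_coneCoord_mul hv hcompl η hW
  have hle : ∀ y ∈ coordCone (coneCoord hv hcompl), η y ≤ 0 := fun y hy => by
    rw [hsum]
    exact Finset.sum_nonpos fun j _ => mul_nonpos_of_nonneg_of_nonpos (hy j) (hv₀ j)
  -- `η ≤ 0` on the cone with equality at `0`, so its maximizers are the zeros of `η`, i.e. the
  -- points whose coordinates vanish wherever `η (v j) < 0`.
  have hzero : ∀ x ∈ coordCone (coneCoord hv hcompl),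
      η x = 0 ↔ ∀ j, η (v j) ≠ 0 → coneCoord hv hcompl j x = 0 := fun x hx => by
    rw [hsum, Finset.sum_eq_zero_iff_of_nonpos fun j _ =>
      mul_nonpos_of_nonneg_of_nonpos (hx j) (hv₀ j)]
    simp only [Finset.mem_univ, true_implies, mul_eq_zero]
    exact forall_congr' fun j => by tauto
  refine ⟨Finset.univ.filter fun j => η (v j) = 0, Set.ext fun x => ?_⟩
  simp only [coordFace, Finset.mem_filter, Finset.mem_univ, true_and, Set.mem_ofPred_eq]
  refine and_congr_right fun hx => ?_
  rw [← hzero x hx]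
  exact ⟨fun h => le_antisymm (hle x hx) (by simpa using h 0 fun _ => by simp),
    fun h y hy => h ▸ hle y hy⟩

theorem sdim_coordFace [FiniteDimensional ℝ E] (T : Finset ι) :
    sdim (coordFace (coneCoord hv hcompl) T) = T.card + Module.finrank ℝ W := by
  set ξ := coneCoord hv hcompl
  have h0 : (0 : E) ∈ coordFace ξ T := ⟨fun i => by simp, fun i _ => by simp⟩
  have hspan : vectorSpan ℝ (coordFace ξ T) = Submodule.span ℝ (v '' T) ⊔ W := by
    rw [vectorSpan_eq_span_vsub_set_right ℝ h0]
    simp only [vsub_eq_sub, sub_zero, Set.image_id']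
    refine le_antisymm (Submodule.span_le.2 fun x hx => ?_) (sup_le (Submodule.span_mono ?_) ?_)
    · have hxT : ∑ j, ξ j x • v j ∈ Submodule.span ℝ (v '' T) := by
        rw [← Finset.sum_subset (Finset.subset_univ T) fun j _ hj => by rw [hx.2 j hj, zero_smul]]
        exact Submodule.sum_mem _ fun j hj =>
          Submodule.smul_mem _ _ (Submodule.subset_span ⟨j, hj, rfl⟩)
      rw [← add_sub_cancel (∑ j, ξ j x • v j) x]
      exact Submodule.add_mem_sup hxT (sub_sum_coneCoord_smul_mem hv hcompl x)
    · rintro _ ⟨j, hj, rfl⟩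
      refine ⟨fun i => ?_, fun i hi => ?_⟩ <;> rw [coneCoord_apply_self hv hcompl]
      · split_ifs <;> norm_num
      · rw [if_neg (by rintro rfl; exact hi hj)]
    · exact fun w hw => Submodule.subset_span ⟨fun i => (coneCoord_apply_of_mem hv hcompl hw i).ge,
        fun i _ => coneCoord_apply_of_mem hv hcompl hw i⟩
  have hdisj : Submodule.span ℝ (v '' T) ⊓ W = ⊥ :=
    (hcompl.disjoint.mono_left (Submodule.span_mono (Set.image_subset_range _ _))).eq_bot
  have hT : Module.finrank ℝ (Submodule.span ℝ (v '' T)) = T.card := by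
    rw [Set.image_eq_range]
    exact (finrank_span_eq_card (hv.comp _ Subtype.val_injective)).trans (Fintype.card_coe T)
  have := Submodule.finrank_sup_add_finrank_inf_eq (Submodule.span ℝ (v '' T)) W
  rw [hdisj, finrank_bot, hT, add_zero] at this
  rw [sdim, hspan, this]

theorem isLeast_coordFace_coordSupport {F : Set E} (hF : F ⊆ coordCone (coneCoord hv hcompl))
    (hne : F.Nonempty) :
    IsLeast {Q | IsFaceOf (coordCone (coneCoord hv hcompl)) Q ∧ F ⊆ Q}
      (coordFace (coneCoord hv hcompl) (coordSupport (coneCoord hv hcompl) F)) := by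
  refine ⟨⟨isFaceOf_coordFace _, subset_coordFace_iff.2 ⟨hF, subset_rfl⟩⟩, ?_⟩
  rintro Q ⟨hQ, hFQ⟩
  obtain ⟨T, rfl⟩ := hQ.exists_eq_coordFace hv hcompl (hne.mono hFQ)
  exact coordFace_mono (subset_coordFace_iff.1 hFQ).2

end SimplicialCone

theorem card_filter_fin_eq_card_add_sub {n m : ℕ} (hmn : m ≤ n) {p : Fin n → Prop}
    [DecidablePred p] {T : Finset (Fin m)} (hlt : ∀ (i : Fin n) (h : (i : ℕ) < m), p i ↔ ⟨i, h⟩ ∈ T)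
    (hge : ∀ i : Fin n, m ≤ (i : ℕ) → p i) :
    (Finset.univ.filter p).card = T.card + (n - m) := by
  have hlow : (Finset.univ.filter fun i : Fin n => p i ∧ (i : ℕ) < m) =
      T.map (Fin.castLEEmb hmn) := by
    ext i
    simp only [Finset.mem_filter, Finset.mem_univ, true_and, Finset.mem_map, Fin.castLEEmb_apply]
    refine ⟨fun ⟨hp, h⟩ => ⟨⟨i, h⟩, (hlt i h).1 hp, rfl⟩, ?_⟩
    rintro ⟨j, hj, rfl⟩
    exact ⟨(hlt _ j.2).2 hj, j.2⟩
  have hhigh : (Finset.univ.filter fun i : Fin n => p i ∧ ¬ (i : ℕ) < m) =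
      Finset.univ.filter fun i : Fin n => ¬ (i : ℕ) < m :=
    Finset.filter_congr fun i _ => and_iff_right_of_imp fun h => hge i (not_lt.1 h)
  have hcount := Finset.card_filter_add_card_filter_not (s := Finset.univ)
    fun i : Fin n => (i : ℕ) < m
  rw [Fin.card_filter_val_lt, Finset.card_univ, Fintype.card_fin, min_eq_right hmn] at hcount
  rw [← Finset.card_filter_add_card_filter_not fun i : Fin n => (i : ℕ) < m,
    Finset.filter_filter, Finset.filter_filter, hlow, hhigh, Finset.card_map]
  omega

section OffCoordinate

variable {E : Type*} [AddCommGroup E] [Module ℝ E] {n m : ℕ}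

def offCoordinate (A : Finset E) (ξ : Fin m → E →ₗ[ℝ] ℝ) (i : Fin n) : Set E :=
  if h : (i : ℕ) < m then convexHull ℝ ((A : Set E) \ ker (ξ ⟨i, h⟩)) else convexHull ℝ ↑A

theorem offCoordinate_subset (A : Finset E) (ξ : Fin m → E →ₗ[ℝ] ℝ) (i : Fin n) :
    offCoordinate A ξ i ⊆ convexHull ℝ ↑A := by
  unfold offCoordinate
  split_ifs
  exacts [convexHull_mono Set.sdiff_subset, subset_rfl]

theorem isDaughter_offCoordinate {A : Finset E} {ξ : Fin m → E →ₗ[ℝ] ℝ}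
    (hA : (A : Set E) ⊆ coordCone ξ) {i : Fin n} (hne : (offCoordinate A ξ i).Nonempty) :
    IsDaughter A (offCoordinate A ξ i) ∧ DFam (convexHull ℝ ↑A) (offCoordinate A ξ i) =
      {G | ∃ h : (i : ℕ) < m, G = convexHull ℝ ↑A ∩ ker (ξ ⟨i, h⟩) ∧ G.Nonempty} := by
  have hAne : A.Nonempty :=
    Finset.coe_nonempty.1 (convexHull_nonempty_iff.1 (hne.mono (offCoordinate_subset A ξ i)))
  have hξ : ∀ j, ∀ a ∈ A, 0 ≤ ξ j a := fun j a ha => hA ha j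
  unfold offCoordinate at hne ⊢
  split_ifs at hne ⊢ with h
  · exact ⟨isDaughter_convexHull_sdiff_ker (hξ _) hne, by
      rw [dFam_convexHull_sdiff_ker hAne (hξ _)]; simp [h]⟩
  · exact ⟨isDaughter_convexHull_self hAne, by rw [dFam_convexHull_self hAne]; simp [h]⟩

theorem card_filter_offCoordinate_inter_nonempty (hmn : m ≤ n) {A : Finset E}
    {ξ : Fin m → E →ₗ[ℝ] ℝ} (hA : (A : Set E) ⊆ coordCone ξ) {F : Set E}
    (hF : IsFaceOf (convexHull ℝ (A : Set E)) F) (hFne : F.Nonempty) :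
    (Finset.univ.filter fun i : Fin n => (offCoordinate A ξ i ∩ F).Nonempty).card =
      (coordSupport ξ F).card + (n - m) := by
  refine card_filter_fin_eq_card_add_sub hmn (fun i h => ?_) fun i h => ?_
  · rw [offCoordinate, dif_pos h, Set.inter_comm, Set.nonempty_iff_ne_empty, ne_eq,
      hF.inter_convexHull_sdiff_ker_eq_empty_iff fun a ha => hA ha _]
    simp [coordSupport]
  · rwa [offCoordinate, dif_neg (not_lt.2 h), Set.inter_eq_right.2 hF.subset]

end OffCoordinate

section LeastFace

variable {E : Type*} [AddCommGroup E] [Module ℝ E] [FiniteDimensional ℝ E]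

theorem sdim_mono {s t : Set E} (h : s ⊆ t) : sdim s ≤ sdim t :=
  Submodule.finrank_mono (vectorSpan_mono ℝ h)

theorem sdim_eq_iff_exists_of_isLeast {C F Q₀ : Set E}
    (hQ₀ : IsLeast {Q | IsFaceOf C Q ∧ F ⊆ Q} Q₀) :
    sdim Q₀ = sdim F ↔ ∃ Q, IsFaceOf C Q ∧ F ⊆ Q ∧ sdim F = sdim Q :=
  ⟨fun h => ⟨Q₀, hQ₀.1.1, hQ₀.1.2, h.symm⟩, fun ⟨_, hQ, hFQ, h⟩ =>
    le_antisymm (h ▸ sdim_mono (hQ₀.2 ⟨hQ, hFQ⟩)) (sdim_mono hQ₀.1.2)⟩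

theorem semiInterlaced_of_isLeast {ι : Type*} [Fintype ι] {A : Finset E} {C : Set E}
    {D : ι → Set E} {Q : Set E → Set E} (hD : ∀ i, IsDaughter A (D i))
    (hQ : ∀ F, IsFaceOf (convexHull ℝ (A : Set E)) F →
      IsLeast {Q' | IsFaceOf C Q' ∧ F ⊆ Q'} (Q F) ∧
        (Finset.univ.filter fun i => (D i ∩ F).Nonempty).card = sdim (Q F)) :
    (∀ F, IsFaceOf (convexHull ℝ (A : Set E)) F →
      ∀ Q', Minimal (fun Q' => IsFaceOf C Q' ∧ F ⊆ Q') Q' →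
      (Finset.univ.filter fun i => (D i ∩ F).Nonempty).card = sdim Q') ∧
    (SemiInterlaced A Finset.univ D ∧
      ∀ F, IsFaceOf (convexHull ℝ (A : Set E)) F →
        (IsSuture A Finset.univ D F ↔ ∃ Q', IsFaceOf C Q' ∧ F ⊆ Q' ∧ sdim F = sdim Q')) := by
  refine ⟨fun F hF Q' hQ' => ?_, ⟨fun i _ => hD i, fun F hF => ?_⟩, fun F hF => ?_⟩
  · rw [(hQ F hF).2, (hQ F hF).1.minimal_iff.1 hQ']
  · exact (hQ F hF).2 ▸ sdim_mono (hQ F hF).1.1.2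
  · rw [IsSuture, (hQ F hF).2, sdim_eq_iff_exists_of_isLeast (hQ F hF).1]
    exact and_iff_right hF

end LeastFace

theorem off_coordinate_semi_interlaced_general (n m : ℕ) (hmn : m ≤ n)
    (v : Fin m → (Fin n → ℝ)) (hv : LinearIndependent ℝ v)
    (W : Submodule ℝ (Fin n → ℝ))
    (hcompl : IsCompl (Submodule.span ℝ (Set.range v)) W)
    (C : Set (Fin n → ℝ))
    (hC : C = {x | ∃ (c : Fin m → ℝ) (w : Fin n → ℝ),
      (∀ i, 0 ≤ c i) ∧ w ∈ W ∧ x = (∑ i, c i • v i) + w})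
    (Efac : Fin m → Set (Fin n → ℝ))
    (hE : ∀ i₀, Efac i₀ = {x | ∃ (c : Fin m → ℝ) (w : Fin n → ℝ),
      (∀ i, 0 ≤ c i) ∧ c i₀ = 0 ∧ w ∈ W ∧ x = (∑ i, c i • v i) + w})
    (A : Finset (Fin n → ℝ))
    (hAC : (A : Set (Fin n → ℝ)) ⊆ C)
    (P : Set (Fin n → ℝ)) (hP : P = convexHull ℝ (A : Set (Fin n → ℝ)))
    (D : Fin n → Set (Fin n → ℝ))
    (hD : ∀ i : Fin n, D i = if h : (i : ℕ) < m then
      convexHull ℝ ((A : Set (Fin n → ℝ)) \ Efac ⟨(i : ℕ), h⟩)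
      else convexHull ℝ (A : Set (Fin n → ℝ)))
    (hne : ∀ i, (D i).Nonempty) :
    (∀ i, IsDaughter A (D i) ∧
      DFam P (D i) =
        {G | ∃ h : (i : ℕ) < m, G = P ∩ Efac ⟨(i : ℕ), h⟩ ∧ G.Nonempty}) ∧
    (∀ F, IsFaceOf P F → ∀ Q, Minimal (fun Q' => IsFaceOf C Q' ∧ F ⊆ Q') Q →
      (Finset.univ.filter fun i => (D i ∩ F).Nonempty).card = sdim Q) ∧
    (SemiInterlaced A Finset.univ D ∧
      ∀ F, IsFaceOf P F →
        (IsSuture A Finset.univ D F ↔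
          ∃ Q, IsFaceOf C Q ∧ F ⊆ Q ∧ sdim F = sdim Q)) := by
  rw [← coordCone_coneCoord hv hcompl] at hC
  subst hC hP
  set ξ := coneCoord hv hcompl
  have hEξ : ∀ j, Efac j = coordCone ξ ∩ ker (ξ j) := fun j =>
    (hE j).trans (coordCone_inter_ker_coneCoord hv hcompl j).symm
  have hDξ : D = offCoordinate A ξ := funext fun i => by
    simp only [hD, offCoordinate, hEξ, Set.sdiff_inter, Set.sdiff_eq_empty.2 hAC, Set.empty_union]
  subst hDξ
  have hPC : convexHull ℝ ↑A ⊆ coordCone ξ := convexHull_min hAC (convex_coordCone ξ)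
  rcases A.eq_empty_or_nonempty with rfl | hA
  · have : IsEmpty (Fin n) := ⟨fun i => by simpa using (hne i).mono (offCoordinate_subset ∅ ξ i)⟩
    have hdim (s : Set (Fin n → ℝ)) : sdim s = 0 := Module.finrank_zero_of_subsingleton
    refine ⟨isEmptyElim, by simp [hdim], ⟨fun i => isEmptyElim i, by simp [hdim]⟩, fun F hF => ?_⟩
    simp only [IsSuture, hdim, Finset.univ_eq_empty, Finset.filter_empty, Finset.card_empty,
      and_true]
    exact ⟨fun _ => ⟨_, isFaceOf_coordFace ∅, hF.subset.trans (by simp)⟩, fun _ => hF⟩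
  refine ⟨fun i => ?_, semiInterlaced_of_isLeast (fun i => (isDaughter_offCoordinate hAC (hne i)).1)
    fun F hF => ⟨isLeast_coordFace_coordSupport hv hcompl (hF.subset.trans hPC) (hF.nonempty hA),
      ?_⟩⟩
  · obtain ⟨hdaughter, hfam⟩ := isDaughter_offCoordinate hAC (hne i)
    refine ⟨hdaughter, ?_⟩
    simp only [hfam, hEξ, ← Set.inter_assoc, Set.inter_eq_left.2 hPC]
  · rw [card_filter_offCoordinate_inter_nonempty hmn hAC hF (hF.nonempty hA), sdim_coordFace,
      finrank_eq_finrank_sub_card_of_isCompl hv hcompl, Module.finrank_fin_fun, Fintype.card_fin]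

/-- **Off-coordinate polytopes are semi-interlaced (Remark on off-coordinate
polytopes).** Let `C = C_Δ ⊕ ℝ^{n−m}` where `C_Δ` is an `m`-dimensional
simplicial cone (spanned by the linearly independent rays `v` with lineality
space `W`), with facets `Efac i`, and let `A ⊆ C` be a finite lattice set with
`P = Conv A` and nonempty off-coordinate polytopes
`D i = Conv (A ∖ Efac i)` for `i < m`, `D i = Conv A` for `i ≥ m`. Then:
(1) each `D i` is a daughter polytope of `A` whose family `𝒟(D i)` is
`{P ∩ Efac i}` if `i < m` and this set is nonempty, and `∅` otherwise;
(2) for every face `F` of `P` the number of `D i` meeting `F` equals the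
dimension of the minimal face of `C` containing `F`;
(3) the `D i` are semi-interlaced in `A` and the sutures are exactly the
V-faces of `P`. -/
theorem off_coordinate_semi_interlaced (n m : ℕ) (hmn : m ≤ n)
    (v : Fin m → (Fin n → ℝ)) (hv : LinearIndependent ℝ v)
    (W : Submodule ℝ (Fin n → ℝ))
    (hcompl : IsCompl (Submodule.span ℝ (Set.range v)) W)
    (C : Set (Fin n → ℝ))
    (hC : C = {x | ∃ (c : Fin m → ℝ) (w : Fin n → ℝ),
      (∀ i, 0 ≤ c i) ∧ w ∈ W ∧ x = (∑ i, c i • v i) + w})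
    (Efac : Fin m → Set (Fin n → ℝ))
    (hE : ∀ i₀, Efac i₀ = {x | ∃ (c : Fin m → ℝ) (w : Fin n → ℝ),
      (∀ i, 0 ≤ c i) ∧ c i₀ = 0 ∧ w ∈ W ∧ x = (∑ i, c i • v i) + w})
    (A : Finset (Fin n → ℝ)) (hlat : ∀ p ∈ A, p ∈ intLattice n)
    (hAC : (A : Set (Fin n → ℝ)) ⊆ C)
    (P : Set (Fin n → ℝ)) (hP : P = convexHull ℝ (A : Set (Fin n → ℝ)))
    (D : Fin n → Set (Fin n → ℝ))
    (hD : ∀ i : Fin n, D i = if h : (i : ℕ) < m then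
      convexHull ℝ ((A : Set (Fin n → ℝ)) \ Efac ⟨(i : ℕ), h⟩)
      else convexHull ℝ (A : Set (Fin n → ℝ)))
    (hne : ∀ i, (D i).Nonempty) :
    (∀ i, IsDaughter A (D i) ∧
      DFam P (D i) =
        {G | ∃ h : (i : ℕ) < m, G = P ∩ Efac ⟨(i : ℕ), h⟩ ∧ G.Nonempty}) ∧
    (∀ F, IsFaceOf P F → ∀ Q, Minimal (fun Q' => IsFaceOf C Q' ∧ F ⊆ Q') Q →
      (Finset.univ.filter fun i => (D i ∩ F).Nonempty).card = sdim Q) ∧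
    (SemiInterlaced A Finset.univ D ∧
      ∀ F, IsFaceOf P F →
        (IsSuture A Finset.univ D F ↔
          ∃ Q, IsFaceOf C Q ∧ F ⊆ Q ∧ sdim F = sdim Q)) :=
  off_coordinate_semi_interlaced_general n m hmn v hv W hcompl C hC Efac hE A hAC P hP D hD hne
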